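/- Let A be a closed semi-algebraic subset of ℝ^p × ℝ^{n−p} which is allowable. Then there is a succession of permissible blow-ups μ: R̃^n → ℝ^n such that μ^{-1}(A) is almost strictly allowable in R̃^n. -/

import Mathlib

/-!
Common definitions: semi-algebraic sets and maps, dimension via the Zariski closure,
Nash submanifolds and Nash maps, generically defined differential forms and their
(absolute and oriented) integrals, faces and (strict) allowability, permissible blow-ups
(encoded combinatorially through their fans of monomial charts), logarithmic forms, and
the complex (admissible) setting.
-/

open MeasureTheory Set
open scoped ENNReal NNReal Topology

noncomputable section

/-- `ℝ^ι` as a Euclidean space. -/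
abbrev Euc (ι : Type) [Fintype ι] : Type := EuclideanSpace ℝ ι

namespace SA

variable {ι κ : Type} [Fintype ι] [Fintype κ]

/-- A subset of `ℝ^ι` is semi-algebraic if it is a finite union of basic sets,
each defined by finitely many polynomial equations and strict inequalities. -/
def IsSemialgebraic (S : Set (Euc ι)) : Prop :=
  ∃ (N : ℕ) (P Q : Fin N → Finset (MvPolynomial ι ℝ)),
    S = ⋃ a : Fin N, {x | (∀ f ∈ P a, MvPolynomial.eval (fun i => x i) f = 0) ∧
      ∀ g ∈ Q a, 0 < MvPolynomial.eval (fun i => x i) g}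

/-- The ideal of polynomials vanishing on a subset of `ℝ^ι`. -/
def vanishingIdeal (S : Set (Euc ι)) : Ideal (MvPolynomial ι ℝ) where
  carrier := {f | ∀ x ∈ S, MvPolynomial.eval (fun i => x i) f = 0}
  zero_mem' := by intro x _; simp
  add_mem' := by intro a b ha hb x hx; simp [ha x hx, hb x hx]
  smul_mem' := by intro c a ha x hx; simp [ha x hx]

/-- The (real) Zariski closure of a subset of `ℝ^ι`. -/
def zariskiClosure (S : Set (Euc ι)) : Set (Euc ι) :=
  {x | ∀ f ∈ vanishingIdeal S, MvPolynomial.eval (fun i => x i) f = 0}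

/-- The dimension of a semi-algebraic set: the Krull dimension of the coordinate ring
of its Zariski closure. -/
def dim (S : Set (Euc ι)) : WithBot ℕ∞ :=
  ringKrullDim (MvPolynomial ι ℝ ⧸ vanishingIdeal S)

/-- Projection of `ℝ^(ι ⊕ κ)` onto the first group of coordinates. -/
def projL (z : Euc (ι ⊕ κ)) : Euc ι := WithLp.toLp 2 fun i => z (Sum.inl i)

/-- Projection of `ℝ^(ι ⊕ κ)` onto the second group of coordinates. -/
def projR (z : Euc (ι ⊕ κ)) : Euc κ := WithLp.toLp 2 fun j => z (Sum.inr j)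

/-- A map defined on a semi-algebraic set is semi-algebraic if its graph is. -/
def IsSemialgebraicOn (S : Set (Euc ι)) (f : Euc ι → Euc κ) : Prop :=
  IsSemialgebraic {z : Euc (ι ⊕ κ) | projL z ∈ S ∧ projR z = f (projL z)}

/-- A real-valued function on a semi-algebraic set is semi-algebraic if its graph is. -/
def IsSemialgebraicFunOn (S : Set (Euc ι)) (f : Euc ι → ℝ) : Prop :=
  IsSemialgebraic {z : Euc (ι ⊕ Fin 1) | projL z ∈ S ∧ z (Sum.inr 0) = f (projL z)}

/-- `M` is a `d`-dimensional smooth submanifold of `ℝ^ι`: near each of its points it can be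
straightened, by a diffeomorphism between open sets, onto a `d`-dimensional coordinate
subspace. -/
def IsSmoothSubmanifold (d : ℕ) (M : Set (Euc ι)) : Prop :=
  ∀ x ∈ M, ∃ (U V : Set (Euc ι)) (φ ψ : Euc ι → Euc ι) (J : Finset ι),
    IsOpen U ∧ x ∈ U ∧ IsOpen V ∧
    ContDiffOn ℝ ((⊤ : ℕ∞) : WithTop ℕ∞) φ U ∧ ContDiffOn ℝ ((⊤ : ℕ∞) : WithTop ℕ∞) ψ V ∧
    Set.MapsTo φ U V ∧ (∀ y ∈ U, ψ (φ y) = y) ∧ (∀ y ∈ V, φ (ψ y) = y) ∧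
    J.card = d ∧ φ '' (U ∩ M) = V ∩ {y | ∀ i ∉ J, y i = 0}

/-- A Nash submanifold of `ℝ^ι` of dimension `d`: a semi-algebraic subset which is a
`d`-dimensional smooth submanifold (such a set is automatically Nash). -/
def IsNashSubmanifold (d : ℕ) (M : Set (Euc ι)) : Prop :=
  IsSemialgebraic M ∧ IsSmoothSubmanifold d M

/-- A map is smooth on a subset `S` if near each point of `S` it admits a smooth local
extension. -/
def SmoothOnSet (S : Set (Euc ι)) (f : Euc ι → Euc κ) : Prop :=
  ∀ x ∈ S, ∃ (U : Set (Euc ι)) (g : Euc ι → Euc κ), IsOpen U ∧ x ∈ U ∧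
    ContDiffOn ℝ ((⊤ : ℕ∞) : WithTop ℕ∞) g U ∧ Set.EqOn f g (S ∩ U)

/-- A Nash map on `S`: semi-algebraic and smooth on `S`. -/
def IsNashMapOn (S : Set (Euc ι)) (f : Euc ι → Euc κ) : Prop :=
  IsSemialgebraicOn S f ∧ SmoothOnSet S f

/-- A Nash (real-valued) function on `S`: semi-algebraic and smooth on `S`. -/
def IsNashFunOn (S : Set (Euc ι)) (f : Euc ι → ℝ) : Prop :=
  IsSemialgebraicFunOn S f ∧
  ∀ x ∈ S, ∃ (U : Set (Euc ι)) (g : Euc ι → ℝ), IsOpen U ∧ x ∈ U ∧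
    ContDiffOn ℝ ((⊤ : ℕ∞) : WithTop ℕ∞) g U ∧ Set.EqOn f g (S ∩ U)

/-- A Nash diffeomorphism from `U` onto `U'`: a bijective Nash map with Nash inverse. -/
def IsNashDiffeoOn (U : Set (Euc ι)) (U' : Set (Euc κ)) (f : Euc ι → Euc κ) : Prop :=
  IsNashMapOn U f ∧ Set.BijOn f U U' ∧
    ∃ g : Euc κ → Euc ι, IsNashMapOn U' g ∧ Set.InvOn g f U U'

/-- A smooth `m`-form on `Ω ⊆ ℝ^ι`, encoded as a function of a point and an `m`-tuple of
vectors: at each point of `Ω` it is an alternating multilinear form, and for each fixed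
tuple of vectors it depends smoothly on the point. -/
def IsSmoothForm (m : ℕ) (Ω : Set (Euc ι)) (ψ : Euc ι → (Fin m → Euc ι) → ℝ) : Prop :=
  (∀ x ∈ Ω, ∃ A : AlternatingMap ℝ (Euc ι) ℝ (Fin m), ψ x = ⇑A) ∧
  ∀ v : Fin m → Euc ι, ContDiffOn ℝ ((⊤ : ℕ∞) : WithTop ℕ∞) (fun x => ψ x v) Ω

/-- Pull-back of an `m`-form `ψ` along a map `h`, differentiated within the set `U`. -/
def pullback {m : ℕ} (h : Euc ι → Euc κ) (U : Set (Euc ι))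
    (ψ : Euc κ → (Fin m → Euc κ) → ℝ) : Euc ι → (Fin m → Euc ι) → ℝ :=
  fun x v => ψ (h x) fun j => fderivWithin ℝ h U x (v j)

/-- The orthonormal `m`-frames tangent to `U` at `x`. -/
def tangentFrames (m : ℕ) (U : Set (Euc ι)) (x : Euc ι) : Set (Fin m → Euc ι) :=
  {v | Orthonormal ℝ v ∧ ∀ j, v j ∈ tangentConeAt ℝ U x}

/-- The integral `∫_U |φ|` of the density of an `m`-form `φ` over `U`: the integral, with
respect to the `m`-dimensional Hausdorff measure, of the norm of `φ` on tangent
orthonormal frames. -/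
def absIntegral (m : ℕ) (U : Set (Euc ι)) (φ : Euc ι → (Fin m → Euc ι) → ℝ) : ℝ≥0∞ :=
  ∫⁻ x in U, ENNReal.ofReal (⨆ v ∈ tangentFrames m U x, |φ x v|) ∂μH[(m : ℝ)]

/-- An orientation of an `m`-dimensional submanifold `U`, presented as a continuous choice
of tangent orthonormal `m`-frames. -/
def IsOrientationFrame (m : ℕ) (U : Set (Euc ι)) (o : Euc ι → Fin m → Euc ι) : Prop :=
  ContinuousOn o U ∧ ∀ x ∈ U, o x ∈ tangentFrames m U x

/-- The integral `∫_U φ` of an `m`-form `φ` over `U`, oriented by the frame `o`. -/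
def orIntegral (m : ℕ) (U : Set (Euc ι)) (o : Euc ι → Fin m → Euc ι)
    (φ : Euc ι → (Fin m → Euc ι) → ℝ) : ℝ :=
  ∫ x in U, φ x (o x) ∂μH[(m : ℝ)]

/-- The standard (positively oriented, orthonormal) frame of `ℝ^m`. -/
def stdFrame (m : ℕ) : Fin m → Euc (Fin m) := fun j => EuclideanSpace.single j 1

/-- `δ(f)`: the maximal cardinality of the finite fibres of `f` restricted to `S`
(`0` if every fibre is infinite). -/
def delta (S : Set (Euc ι)) (f : Euc ι → Euc κ) : ℕ :=
  sSup {k : ℕ | ∃ u ∈ f '' S, (S ∩ f ⁻¹' {u}).Finite ∧ (S ∩ f ⁻¹' {u}).ncard = k}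

/-- A member of `Op(S)` for a semi-algebraic set `S` of dimension `≤ m`: if `dim S = m`, a
dense open semi-algebraic subset `U ⊆ S` which is an `m`-dimensional Nash submanifold with
`dim (S ∖ U) < m`; integrals of `m`-forms over `S` are computed over such a `U`. By the
convention of the paper, if `dim S < m` the integral is set to `0`, i.e. `U = ∅`. -/
def PullbackDomain (m : ℕ) (S U : Set (Euc ι)) : Prop :=
  (dim S = ((m : ℕ∞) : WithBot ℕ∞) ∧ U ⊆ S ∧ (∃ O, IsOpen O ∧ U = S ∩ O) ∧
    IsSemialgebraic U ∧ IsNashSubmanifold m U ∧ dim (S \ U) < ((m : ℕ∞) : WithBot ℕ∞)) ∨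
  (dim S < ((m : ℕ∞) : WithBot ℕ∞) ∧ U = ∅)

/-- A domain over which the pull-back of an `m`-form along `h` is defined: a member of
`Op(S)` on which `h` is a Nash map. -/
def IntegralDomain (m : ℕ) (S U : Set (Euc ι)) (h : Euc ι → Euc κ) : Prop :=
  PullbackDomain m S U ∧ IsNashMapOn U h

/-- The face of `ℝ^(ι⊕κ)` cut out by the vanishing of the distinguished coordinates in `I`. -/
def face (κ : Type) [Fintype κ] (I : Finset ι) : Set (Euc (ι ⊕ κ)) :=
  {z | ∀ i ∈ I, z (Sum.inl i) = 0}

/-- Allowability: the intersection with every proper face has dimension strictly smaller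
than the dimension of the face. -/
def Allowable (C : Set (Euc (ι ⊕ κ))) : Prop :=
  ∀ I : Finset ι, I.Nonempty →
    dim (C ∩ face κ I) + ((I.card : ℕ∞) : WithBot ℕ∞) <
      (((Fintype.card ι + Fintype.card κ : ℕ) : ℕ∞) : WithBot ℕ∞)

/-- Strict allowability with respect to the face cut out by `I`: the Zariski closure of the
intersection contains no face. -/
def StrictlyAllowableWrt (C : Set (Euc (ι ⊕ κ))) (I : Finset ι) : Prop :=
  ∀ I' : Finset ι, ¬ (face κ I' ⊆ zariskiClosure (C ∩ face κ I))

/-- Strict allowability: strict allowability with respect to every face (including the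
ambient space itself). -/
def StrictlyAllowable (C : Set (Euc (ι ⊕ κ))) : Prop :=
  ∀ I : Finset ι, StrictlyAllowableWrt C I

/-- Almost strict allowability: strict allowability with respect to every proper face. -/
def AlmostStrictlyAllowable (C : Set (Euc (ι ⊕ κ))) : Prop :=
  ∀ I : Finset ι, I.Nonempty → StrictlyAllowableWrt C I

/-- The set of columns ("rays") of a matrix. -/
def raysOf {p : ℕ} (M : Matrix (Fin p) (Fin p) ℤ) : Finset (Fin p → ℤ) :=
  Finset.univ.image fun j i => M i j

/-- The set of columns of `M` indexed by `J`. -/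
def colSet {p : ℕ} (M : Matrix (Fin p) (Fin p) ℤ) (J : Finset (Fin p)) :
    Finset (Fin p → ℤ) :=
  J.image fun j i => M i j

/-- Star subdivision of a smooth fan (recorded through its maximal cones, each given by the
matrix of its ray generators) at the cone spanned by the rays in `R`. -/
def starSubdiv {p : ℕ} (F : Finset (Matrix (Fin p) (Fin p) ℤ)) (R : Finset (Fin p → ℤ)) :
    Finset (Matrix (Fin p) (Fin p) ℤ) :=
  F.filter (fun M => ¬ R ⊆ raysOf M) ∪
  (F.filter (fun M => R ⊆ raysOf M)).biUnion fun M =>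
    (Finset.univ.filter fun j : Fin p => (fun i => M i j) ∈ R).image fun j =>
      M.updateCol j fun i => ∑ v ∈ R, v i

/-- Successions of permissible blow-ups over a given stage, recorded combinatorially through
the fans of their monomial charts: each permissible blow-up is the star subdivision of the
fan at a face of codimension `≥ 2` (a cone spanned by at least two of the rays of a maximal
cone). -/
inductive IsBlowupTower (p : ℕ) :
    Finset (Matrix (Fin p) (Fin p) ℤ) → Finset (Matrix (Fin p) (Fin p) ℤ) → Prop
  | refl (F : Finset (Matrix (Fin p) (Fin p) ℤ)) : IsBlowupTower p F F
  | step (F₀ F : Finset (Matrix (Fin p) (Fin p) ℤ)) (h : IsBlowupTower p F₀ F)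
      (M : Matrix (Fin p) (Fin p) ℤ) (hM : M ∈ F) (J : Finset (Fin p)) (hJ : 2 ≤ J.card) :
      IsBlowupTower p F₀ (starSubdiv F (colSet M J))

/-- A succession of permissible blow-ups of the base space itself (whose fan consists of the
single standard cone, with ray matrix `1`). -/
def IsBlowupFan (p : ℕ) (F : Finset (Matrix (Fin p) (Fin p) ℤ)) : Prop :=
  IsBlowupTower p {1} F

/-- A monomial chart map `ℝ^p × ℝ^q → ℝ^p × ℝ^q` of a succession of permissible blow-ups:
the monomial map with (nonnegative) exponent matrix `M` on the first factor and the
identity on the second. -/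
def monMap (p q : ℕ) (M : Matrix (Fin p) (Fin p) ℤ) (z : Euc (Fin p ⊕ Fin q)) :
    Euc (Fin p ⊕ Fin q) :=
  WithLp.toLp 2 <| Sum.elim (fun i => ∏ j : Fin p, z (Sum.inl j) ^ (M i j).toNat) fun j => z (Sum.inr j)

/-- The monomial map with integer exponent matrix `N` (a transition map between charts). -/
def monMapZ (p q : ℕ) (N : Matrix (Fin p) (Fin p) ℤ) (z : Euc (Fin p ⊕ Fin q)) :
    Euc (Fin p ⊕ Fin q) :=
  WithLp.toLp 2 <| Sum.elim (fun i => ∏ j : Fin p, z (Sum.inl j) ^ (N i j)) fun j => z (Sum.inr j)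

/-- The locus where the monomial map with exponent matrix `N` is regular. -/
def transDomain (p q : ℕ) (N : Matrix (Fin p) (Fin p) ℤ) : Set (Euc (Fin p ⊕ Fin q)) :=
  {z | ∀ i j, N i j < 0 → z (Sum.inl j) ≠ 0}

/-- A family of subsets of the charts of the succession of blow-ups with fan `F` defines a
global subset iff it is compatible with the transition maps between charts. -/
def CompatibleFamily (p q : ℕ) (F : Finset (Matrix (Fin p) (Fin p) ℤ))
    (B : Matrix (Fin p) (Fin p) ℤ → Set (Euc (Fin p ⊕ Fin q))) : Prop :=
  ∀ M ∈ F, ∀ M' ∈ F, ∀ z ∈ transDomain p q (M'⁻¹ * M),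
    monMapZ p q (M'⁻¹ * M) z ∈ transDomain p q (M⁻¹ * M') →
    monMapZ p q (M⁻¹ * M') (monMapZ p q (M'⁻¹ * M) z) = z →
    (z ∈ B M ↔ monMapZ p q (M'⁻¹ * M) z ∈ B M')

/-- The basic logarithmic `m`-form
`(dr_{i₁}/r_{i₁}) ∧ ⋯ ∧ (dr_{i_k}/r_{i_k}) ∧ dx_{j₁} ∧ ⋯ ∧ dx_{j_{m-k}}`
(`P = {i₁ < ⋯ < i_k}`, `Q = {j₁ < ⋯ < j_{m-k}}`) evaluated at the point `z` on the
vectors `v`. -/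
def logTerm (p q : ℕ) (m : ℕ) (P : Finset (Fin p)) (Q : Finset (Fin q))
    (z : Euc (Fin p ⊕ Fin q)) (v : Fin m → Euc (Fin p ⊕ Fin q)) : ℝ :=
  Matrix.det (Matrix.of fun l k : Fin m =>
    if hl : (l : ℕ) < P.card then
      v k (Sum.inl ((P.orderIsoOfFin rfl) ⟨l, hl⟩)) /
        z (Sum.inl ((P.orderIsoOfFin rfl) ⟨l, hl⟩))
    else if hq : (l : ℕ) - P.card < Q.card then
      v k (Sum.inr ((Q.orderIsoOfFin rfl) ⟨(l : ℕ) - P.card, hq⟩))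
    else 0)

/-- An `m`-form on `ℝ^p × ℝ^q` with logarithmic singularities along the hyperplanes
`{r_i = 0}`: away from these hyperplanes it is a sum of basic logarithmic forms with
coefficients smooth on all of `ℝ^p × ℝ^q`. -/
def IsLogForm (p q : ℕ) (m : ℕ)
    (ω : Euc (Fin p ⊕ Fin q) → (Fin m → Euc (Fin p ⊕ Fin q)) → ℝ) : Prop :=
  ∃ a : Finset (Fin p) × Finset (Fin q) → Euc (Fin p ⊕ Fin q) → ℝ,
    (∀ s, ContDiff ℝ ((⊤ : ℕ∞) : WithTop ℕ∞) (a s)) ∧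
    ∀ z, (∀ i : Fin p, z (Sum.inl i) ≠ 0) → ∀ v,
      ω z v = ∑ s ∈ Finset.univ.filter
          (fun s : Finset (Fin p) × Finset (Fin q) => s.1.card + s.2.card = m),
        a s z * logTerm p q m s.1 s.2 z v

section Projections
variable {p q' : ℕ}

/-- The projection `ℝ^p × ℝ^{q'+1} → ℝ^p × ℝ^{q'}` forgetting the last coordinate `x_n`. -/
def pr1 (z : Euc (Fin p ⊕ Fin (q' + 1))) : Euc (Fin p ⊕ Fin q') :=
  WithLp.toLp 2 <| Sum.elim (fun i => z (Sum.inl i)) fun j => z (Sum.inr j.castSucc)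

/-- The projection `ℝ^p × ℝ^{q'} → ℝ^p` onto the first group of coordinates. -/
def pr2 (w : Euc (Fin p ⊕ Fin q')) : Euc (Fin p) := WithLp.toLp 2 fun i => w (Sum.inl i)

/-- Adjoining a value of the last coordinate `x_n`. -/
def combineLast (w : Euc (Fin p ⊕ Fin q')) (s : ℝ) : Euc (Fin p ⊕ Fin (q' + 1)) :=
  WithLp.toLp 2 <| Sum.elim (fun i => w (Sum.inl i)) fun j =>
    if h : (j : ℕ) < q' then w (Sum.inr ⟨j, h⟩) else s

/-- The linear change of variables `x_i ↦ x_i + c_i x_n` (`p < i < n`), `x_n ↦ x_n`. -/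
def lc (c : Fin q' → ℝ) (z : Euc (Fin p ⊕ Fin (q' + 1))) : Euc (Fin p ⊕ Fin (q' + 1)) :=
  WithLp.toLp 2 <| Sum.elim (fun i => z (Sum.inl i)) fun j =>
    if h : (j : ℕ) < q' then z (Sum.inr j) + c ⟨j, h⟩ * z (Sum.inr (Fin.last q')) else
      z (Sum.inr j)

/-- Condition (F): over the neighbourhood `V₀ = {|r_i| < ρ₀}` of the origin, the projection
forgetting `x_n`, restricted to `A ∩ {r_i = 0}`, has finite fibres (for each `i`). -/
def ConditionF (p q' : ℕ) (ρ₀ : ℝ) (A : Set (Euc (Fin p ⊕ Fin (q' + 1)))) : Prop :=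
  ∀ i : Fin p, ∀ w : Euc (Fin p ⊕ Fin q'), (∀ i' : Fin p, |w (Sum.inl i')| < ρ₀) →
    {z | z ∈ A ∧ z (Sum.inl i) = 0 ∧ pr1 z = w}.Finite

/-- `v(A|x_n; r)`: the supremum, over the points `T` of `ℝ^{n-1}` lying over `r ∈ ℝ^p`, of
the Lebesgue measure (with respect to `dx_n`) of the fibre of `A` over `T`. -/
def vfun (A : Set (Euc (Fin p ⊕ Fin (q' + 1)))) (r : Euc (Fin p)) : ℝ≥0∞ :=
  ⨆ w : {w : Euc (Fin p ⊕ Fin q') // pr2 w = r},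
    volume {s : ℝ | combineLast w.1 s ∈ A}

end Projections

/-- A Zariski open subset of `ℝ^ι`. -/
def IsZariskiOpen (W : Set (Euc ι)) : Prop :=
  ∃ T : Set (MvPolynomial ι ℝ),
    W = {x | ∃ f ∈ T, MvPolynomial.eval (fun i => x i) f ≠ 0}

/-- The set of points of `V` that are nonsingular in dimension `d`: near such a point, `V`
is cut out by `card ι − d` polynomials vanishing on `V` whose gradients at the point are
linearly independent. -/
def RegPts (d : ℕ) (V : Set (Euc ι)) : Set (Euc ι) :=
  {x | x ∈ V ∧ ∃ f : Fin (Fintype.card ι - d) → MvPolynomial ι ℝ,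
    (∀ j, f j ∈ vanishingIdeal V) ∧
    (∃ O : Set (Euc ι), IsOpen O ∧ x ∈ O ∧
      V ∩ O = {y | y ∈ O ∧ ∀ j, MvPolynomial.eval (fun i => y i) (f j) = 0}) ∧
    LinearIndependent ℝ
      (fun j => (WithLp.toLp 2 (fun i => MvPolynomial.eval (fun i' => x i')
        (MvPolynomial.pderiv i (f j))) : Euc ι))}

/-- The standard `m`-simplex `Δ^m ⊆ ℝ^m`. -/
def simplex (m : ℕ) : Set (Euc (Fin m)) := {x | (∀ i, 0 ≤ x i) ∧ ∑ i, x i ≤ 1}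

/-- The relative interior of the face of `Δ^m` given by the vanishing of the coordinates in
`J` and (if `b = true`) the equation `∑ x_i = 1`. -/
def relintFace (m : ℕ) (J : Finset (Fin m)) (b : Bool) : Set (Euc (Fin m)) :=
  {x | (∀ i ∈ J, x i = 0) ∧ (∀ i ∉ J, 0 < x i) ∧
    (if b then ∑ i, x i = 1 else ∑ i, x i < 1)}

/-- The vertices of `Δ^m`: `vert m 0 = 0` and `vert m (t+1) = e_t`. -/
def vert (m : ℕ) (t : Fin (m + 1)) : Euc (Fin m) :=
  WithLp.toLp 2 fun i => if (i : ℕ) + 1 = (t : ℕ) then 1 else 0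

/-- Barycentric coordinates of a point of `Δ^k`. -/
def bary {k : ℕ} (y : Euc (Fin k)) (l : Fin (k + 1)) : ℝ :=
  if h : (l : ℕ) = 0 then 1 - ∑ i, y i else y ⟨(l : ℕ) - 1, by have := l.isLt; omega⟩

/-- The `j`-th affine face map `Δ^k → Δ^{k+1}` (omitting the `j`-th vertex). -/
def faceMap (k : ℕ) (j : Fin (k + 2)) (y : Euc (Fin k)) : Euc (Fin (k + 1)) :=
  WithLp.toLp 2 fun i => ∑ l : Fin (k + 1), bary y l * vert (k + 1) (j.succAbove l) i

/-- The exterior derivative of a `k`-form (with smooth coefficients). -/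
def extDeriv (k : ℕ) (ψ : Euc ι → (Fin k → Euc ι) → ℝ) :
    Euc ι → (Fin (k + 1) → Euc ι) → ℝ :=
  fun x v => ∑ j : Fin (k + 1), (-1 : ℝ) ^ (j : ℕ) *
    fderiv ℝ (fun y => ψ y fun i => v (j.succAbove i)) x (v j)

/-- Adjoining a parameter value as an extra coordinate. -/
def pair {m : ℕ} (x : Euc (Fin m)) (t : ℝ) : Euc (Fin m ⊕ Fin 1) :=
  WithLp.toLp 2 <| Sum.elim (fun i => x i) fun _ => t

/-- `ℂ^n` identified with `ℝ^n × ℝ^n`: the `k`-th complex coordinate of the real point. -/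
def cxVec (n : ℕ) (w : Euc (Fin n ⊕ Fin n)) (k : Fin n) : ℂ :=
  Complex.ofReal (w (Sum.inl k)) + Complex.I * Complex.ofReal (w (Sum.inr k))

/-- The face `ℍ_I = {z_i = 0, i ∈ I}` of `ℂ^n`. -/
def cxFace (n : ℕ) (I : Finset (Fin n)) : Set (Euc (Fin n ⊕ Fin n)) :=
  {w | ∀ i ∈ I, cxVec n w i = 0}

/-- The divisor `D = ⋃ {z_k = 1}` of `ℂ^n`. -/
def cxD (n : ℕ) : Set (Euc (Fin n ⊕ Fin n)) :=
  {w | ∃ k : Fin n, cxVec n w k = 1}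

/-- `m`-admissibility of a closed semi-algebraic subset of `ℂ^n`:
`dim (A ∩ ℍ_I ∩ (ℂ^n − D)) ≤ m − 2|I|` for every `I`. -/
def mAdmissible (n m : ℕ) (A : Set (Euc (Fin n ⊕ Fin n))) : Prop :=
  ∀ I : Finset (Fin n),
    dim (A ∩ cxFace n I ∩ (cxD n)ᶜ) + (((2 * I.card : ℕ) : ℕ∞) : WithBot ℕ∞) ≤
      ((m : ℕ∞) : WithBot ℕ∞)

/-- The polar-coordinate parametrisation of the sector `i^α · ℂ₊`:
`(r, τ) ↦ i^α · (r/√(τ²+1)) · (1 + iτ)`. -/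
def polarC (α : ℕ) (r τ : ℝ) : ℂ :=
  Complex.I ^ α *
    (Complex.ofReal (r / Real.sqrt (τ ^ 2 + 1)) +
      Complex.I * Complex.ofReal (r * τ / Real.sqrt (τ ^ 2 + 1)))

/-- The product polar-coordinate map `π : C̃₊ⁿ → ℂⁿ` (in real coordinates), the `k`-th
factor landing in the sector of index `α k`. -/
def polarMap (n : ℕ) (α : Fin n → ℕ) (w : Euc (Fin n ⊕ Fin n)) : Euc (Fin n ⊕ Fin n) :=
  WithLp.toLp 2 <| Sum.elim (fun k => (polarC (α k) (w (Sum.inl k)) (w (Sum.inr k))).re)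
    fun k => (polarC (α k) (w (Sum.inl k)) (w (Sum.inr k))).im

/-- `C̃₊ⁿ = (ℝ_{≥0} × [−1,1])ⁿ`. -/
def tildeDomain (n : ℕ) : Set (Euc (Fin n ⊕ Fin n)) :=
  {w | ∀ k : Fin n, 0 ≤ w (Sum.inl k) ∧ |w (Sum.inr k)| ≤ 1}

/-- The map `q = q_{P,Q,R}` recording the coordinates `r_i (i ∈ P)`, `τ_j (j ∈ Q)` and
`(r_k, τ_k) (k ∈ R)`. -/
def qMap (n : ℕ) (P Q R : Finset (Fin n)) (w : Euc (Fin n ⊕ Fin n)) :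
    Euc (↥P ⊕ (↥Q ⊕ (↥R ⊕ ↥R))) :=
  WithLp.toLp 2 <| Sum.elim (fun i => w (Sum.inl i.1))
    (Sum.elim (fun j => w (Sum.inr j.1))
      (Sum.elim (fun k => w (Sum.inl k.1)) fun k => w (Sum.inr k.1)))

/-- The basic complex logarithmic form `(dz₁/z₁ ∧ ⋯ ∧ dz_n/z_n) ∧ ⋀_{k∈R} dz̄_k`
evaluated at `z` on the (real) tangent vectors `v`. -/
def cxLogTerm (n m : ℕ) (R : Finset (Fin n)) (z : Euc (Fin n ⊕ Fin n))
    (v : Fin m → Euc (Fin n ⊕ Fin n)) : ℂ :=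
  Matrix.det (Matrix.of fun l k : Fin m =>
    if hl : (l : ℕ) < n then
      cxVec n (v k) ⟨l, hl⟩ / cxVec n z ⟨l, hl⟩
    else if hr : (l : ℕ) - n < R.card then
      starRingEnd ℂ (cxVec n (v k) ((R.orderIsoOfFin rfl) ⟨(l : ℕ) - n, hr⟩))
    else 0)

/-- An `(n, m−n)`-form on `ℂ^n` with logarithmic singularities along the coordinate
hyperplanes: a linear combination, with coefficients smooth functions on `ℂ^n`, of the
forms `(dz₁/z₁ ∧ ⋯ ∧ dz_n/z_n) ∧ ⋀_{k∈R} dz̄_k` with `|R| = m − n`. -/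
def IsCxLogForm (n m : ℕ)
    (ω : Euc (Fin n ⊕ Fin n) → (Fin m → Euc (Fin n ⊕ Fin n)) → ℂ) : Prop :=
  ∃ a : Finset (Fin n) → Euc (Fin n ⊕ Fin n) → ℂ,
    (∀ R, ContDiff ℝ ((⊤ : ℕ∞) : WithTop ℕ∞) (a R)) ∧
    ∀ z, (∀ k : Fin n, cxVec n z k ≠ 0) → ∀ v,
      ω z v = ∑ R ∈ Finset.univ.filter (fun R : Finset (Fin n) => R.card = m - n),
        a R z * cxLogTerm n m R z v

/-- The integral of the density `|φ|` of a complex-valued `m`-form over `U`. -/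
def absIntegralC (m : ℕ) (U : Set (Euc ι)) (φ : Euc ι → (Fin m → Euc ι) → ℂ) : ℝ≥0∞ :=
  ∫⁻ x in U, ENNReal.ofReal (⨆ v ∈ tangentFrames m U x, ‖φ x v‖) ∂μH[(m : ℝ)]

/-- The substitution homomorphism of the chart with exponent matrix `M`:
`x_i ↦ ∏_j x_j^{M i j}` on the first `p` variables. -/
def chartHom (k : Type) [CommSemiring k] (p q : ℕ) (M : Matrix (Fin p) (Fin p) ℤ) :
    MvPolynomial (Fin p ⊕ Fin q) k →ₐ[k] MvPolynomial (Fin p ⊕ Fin q) k :=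
  MvPolynomial.aeval (Sum.elim
    (fun i => ∏ j : Fin p,
      (MvPolynomial.X (Sum.inl j) : MvPolynomial (Fin p ⊕ Fin q) k) ^ (M i j).toNat)
    fun j => MvPolynomial.X (Sum.inr j))

/-- The product of the first `p` variables. -/
def torusMon (k : Type) [CommSemiring k] (p q : ℕ) : MvPolynomial (Fin p ⊕ Fin q) k :=
  ∏ i : Fin p, MvPolynomial.X (Sum.inl i)

/-- The ideal of the strict transform, in the chart with exponent matrix `M`, of the
subvariety cut out by `P`: the saturation, with respect to the exceptional coordinates, of
the image of `P` under the chart substitution. -/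
def strictIdeal (k : Type) [CommRing k] (p q : ℕ) (M : Matrix (Fin p) (Fin p) ℤ)
    (P : Ideal (MvPolynomial (Fin p ⊕ Fin q) k)) :
    Ideal (MvPolynomial (Fin p ⊕ Fin q) k) where
  carrier := {f | ∃ N : ℕ, torusMon k p q ^ N * f ∈ Ideal.map (chartHom k p q M) P}
  zero_mem' := ⟨0, by simp⟩
  add_mem' := by
    rintro a b ⟨Na, ha⟩ ⟨Nb, hb⟩
    refine ⟨Na + Nb, ?_⟩
    have h1 : torusMon k p q ^ (Na + Nb) * (a + b)
        = torusMon k p q ^ Nb * (torusMon k p q ^ Na * a)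
          + torusMon k p q ^ Na * (torusMon k p q ^ Nb * b) := by ring
    rw [h1]
    exact Ideal.add_mem _ (Ideal.mul_mem_left _ _ ha) (Ideal.mul_mem_left _ _ hb)
  smul_mem' := by
    rintro c a ⟨N, ha⟩
    refine ⟨N, ?_⟩
    have h1 : torusMon k p q ^ N * (c • a) = c * (torusMon k p q ^ N * a) := by
      rw [smul_eq_mul]; ring
    rw [h1]
    exact Ideal.mul_mem_left _ _ ha

/-- The ideal of the face `{x_i = 0, i ∈ I}`. -/
def faceIdeal (k : Type) [CommSemiring k] (p q : ℕ) (I : Finset (Fin p)) :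
    Ideal (MvPolynomial (Fin p ⊕ Fin q) k) :=
  Ideal.span ((fun i => (MvPolynomial.X (Sum.inl i) : MvPolynomial (Fin p ⊕ Fin q) k)) '' I)

end SA

/-!
Allowability of `A` along a proper face `F_K` says `dim (A ∩ F_K) < dim F_K`; hence some
polynomial `g_K` vanishing on `A ∩ F_K` has a monomial free of the variables `r_i`, `i ∈ K`
(otherwise the coordinate ring of `A ∩ F_K` would surject onto the polynomial ring in the
remaining `n - |K|` variables).

Pulled back along a monomial chart, the monomials of `g_K` become monomials whose `r`-exponents
are the images of the old ones under the exponent matrix. Star subdivisions of two-dimensional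
cones produce a smooth fan whose cones are sign-coherent for every difference of exponents of
monomials of one `g_K`; in each chart the pulled-back monomials of `g_K` are then totally ordered
by divisibility in the `r`-variables, so the pull-back of `g_K` is a monomial in `r` times a
factor which does not vanish identically on the smallest face `{r = 0}`. On the stratum where
exactly the `r_j`, `j ∈ L`, vanish, the chart maps into a face `F_K`, the monomial does not
vanish, and so the factor does. The product of these factors over all strata vanishes on
`μ⁻¹(A) ∩ F_I` but not on `{r = 0}`, which lies in every face.
-/

namespace SA

open MvPolynomial
open scoped Matrix

section General

theorem exists_mem_forall_le_of_comparable {α β : Type*} [PartialOrder β] {s : Finset α}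
    (hs : s.Nonempty) (f : α → β) (h : ∀ a ∈ s, ∀ b ∈ s, f a ≤ f b ∨ f b ≤ f a) :
    ∃ a ∈ s, ∀ b ∈ s, f a ≤ f b := by
  obtain ⟨a, ha, hmin⟩ := s.exists_minimalFor f hs
  exact ⟨a, ha, fun b hb => (h a ha b hb).elim id (hmin hb)⟩

theorem prodLex_sup_card_lt {α : Type*} [DecidableEq α] (w : α → ℕ) {s t : Finset α} {a : α}
    (ha : a ∈ s) (hmax : ∀ y ∈ s, w y ≤ w a) (ht : ∀ y ∈ t, w y < w a ∨ y ∈ s.erase a) :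
    Prod.Lex (· < ·) (· < ·) (t.sup w, (t.filter fun y => w y = t.sup w).card)
      (s.sup w, (s.filter fun y => w y = s.sup w).card) := by
  have hs : s.sup w = w a := le_antisymm (Finset.sup_le hmax) (Finset.le_sup ha)
  have hts : t.sup w ≤ w a := Finset.sup_le fun y hy =>
    (ht y hy).elim le_of_lt fun h => hmax y (Finset.mem_of_mem_erase h)
  rw [hs]
  rcases hts.lt_or_eq with hlt | heq
  · exact .left _ _ hlt
  · rw [heq]
    refine .right _ (Finset.card_lt_card ⟨fun y hy => ?_, fun h => ?_⟩)
    · rw [Finset.mem_filter] at hy ⊢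
      rcases ht y hy.1 with h | h
      · omega
      · exact ⟨Finset.mem_of_mem_erase h, hy.2⟩
    · rcases ht a (Finset.mem_filter.1 (h (Finset.mem_filter.2 ⟨ha, rfl⟩))).1 with h | h
      · exact lt_irrefl _ h
      · exact Finset.notMem_erase a s h

theorem eval_monomial_one_ne_zero {σ : Type*} {m : σ →₀ ℕ} {x : σ → ℝ}
    (h : ∀ s, m s ≠ 0 → x s ≠ 0) : eval x (monomial m (1 : ℝ)) ≠ 0 := by
  rw [eval_monomial, one_mul, Finsupp.prod]
  exact Finset.prod_ne_zero_iff.2 fun s hs => pow_ne_zero _ (h s (Finsupp.mem_support_iff.1 hs))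

theorem eval_killCompl_inr {ι κ : Type} (x : κ → ℝ) (f : MvPolynomial (ι ⊕ κ) ℝ) :
    eval x (killCompl Sum.inr_injective f) = eval (Sum.elim 0 x) f := by
  rw [← coe_aeval_eq_eval, ← coe_aeval_eq_eval]
  refine DFunLike.congr_fun (algHom_ext fun s => ?_ :
    (aeval x).comp (killCompl Sum.inr_injective) = aeval (Sum.elim 0 x)) f
  rcases s with i | k <;> simp [killCompl]

/-- `killCompl Sum.inr_injective f` is the restriction of `f` to the smallest face `{r = 0}`,
which lies in every face. -/
theorem strictlyAllowableWrt_of_killCompl_ne_zero {ι κ : Type} [Fintype ι] [Fintype κ]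
    {C : Set (Euc (ι ⊕ κ))} {I : Finset ι} {f : MvPolynomial (ι ⊕ κ) ℝ}
    (hf : f ∈ vanishingIdeal (C ∩ face κ I)) (hf0 : killCompl (R := ℝ) Sum.inr_injective f ≠ 0) :
    StrictlyAllowableWrt C I := by
  intro I' hsub
  obtain ⟨x, hx⟩ : ∃ x, eval x (killCompl (R := ℝ) Sum.inr_injective f) ≠ 0 := by
    by_contra! h
    exact hf0 (MvPolynomial.funext (by simpa using h))
  have hζ : (WithLp.toLp 2 (Sum.elim 0 x) : Euc (ι ⊕ κ)) ∈ face κ I' := fun _ _ => rfl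
  exact hx ((eval_killCompl_inr x f).trans (hsub hζ f hf))

end General

section Dimension

variable {ι κ : Type} [Fintype ι] [Fintype κ]

theorem natCard_le_dim_of_vanishingIdeal_le_ker_killCompl {τ : Type} [Finite τ] {f : τ → ι}
    (hf : Function.Injective f) {S : Set (Euc ι)}
    (hS : vanishingIdeal S ≤ RingHom.ker (killCompl (R := ℝ) hf)) :
    ((Nat.card τ : ℕ∞) : WithBot ℕ∞) ≤ dim S := by
  have hsurj : Function.Surjective (Ideal.Quotient.lift _ (killCompl (R := ℝ) hf).toRingHom hS) :=
    Ideal.Quotient.lift_surjective_of_surjective _ _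
      (fun g => ⟨rename f g, killCompl_rename_app hf g⟩)
  calc ((Nat.card τ : ℕ∞) : WithBot ℕ∞)
      = ringKrullDim ℝ + Nat.card τ := by rw [ringKrullDim_eq_zero_of_field]; simp
    _ ≤ ringKrullDim (MvPolynomial τ ℝ) := ringKrullDim_add_natCard_le_ringKrullDim_mvPolynomial τ
    _ ≤ dim S := ringKrullDim_le_of_surjective _ hsurj

theorem Allowable.exists_mem_vanishingIdeal {A : Set (Euc (ι ⊕ κ))} (hA : Allowable A)
    {K : Finset ι} (hK : K.Nonempty) :
    ∃ g ∈ vanishingIdeal (A ∩ face κ K), ∃ d ∈ g.support, ∀ i ∈ K, d (Sum.inl i) = 0 := by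
  classical
  by_contra! h
  have hf : Function.Injective (Sum.map ((↑) : {i // i ∉ K} → ι) (id : κ → κ)) :=
    Sum.map_injective.2 ⟨Subtype.val_injective, Function.injective_id⟩
  have hker : vanishingIdeal (A ∩ face κ K) ≤ RingHom.ker (killCompl (R := ℝ) hf) := by
    intro g hg
    rw [RingHom.mem_ker]
    ext s
    rw [coeff_killCompl, coeff_zero, ← notMem_support_iff]
    intro hs
    obtain ⟨i, hi, hne⟩ := h g hg _ hs
    exact hne (Finsupp.mapDomain_of_notMem_range _ _ (by simp [hi]))
  have hdim := natCard_le_dim_of_vanishingIdeal_le_ker_killCompl hf hker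
  have hcard : Nat.card ({i // i ∉ K} ⊕ κ) + K.card = Fintype.card ι + Fintype.card κ := by
    have := K.card_le_univ
    rw [Nat.card_eq_fintype_card, Fintype.card_sum, Fintype.card_subtype_compl,
      Fintype.card_coe]
    omega
  have := (add_le_add_left hdim ((K.card : ℕ∞) : WithBot ℕ∞)).trans_lt (hA K hK)
  rw [← WithBot.coe_add, ← Nat.cast_add, hcard] at this
  exact lt_irrefl _ this

end Dimension

section Fan

variable {p : ℕ}

theorem mem_raysOf {M : Matrix (Fin p) (Fin p) ℤ} {v : Fin p → ℤ} :
    v ∈ raysOf M ↔ ∃ j, Mᵀ j = v := by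
  simp only [raysOf, Finset.mem_image, Finset.mem_univ, true_and]
  rfl

theorem transpose_injective_of_det_ne_zero {M : Matrix (Fin p) (Fin p) ℤ} (hM : M.det ≠ 0) :
    Function.Injective Mᵀ := fun j k hjk => by
  by_contra hne
  exact hM (Matrix.det_zero_of_column_eq hne fun i => congrFun hjk i)

theorem mem_raysOf_updateCol {M : Matrix (Fin p) (Fin p) ℤ} {j : Fin p} {u v : Fin p → ℤ}
    (hv : v ∈ raysOf (M.updateCol j u)) : v = u ∨ ∃ k ≠ j, Mᵀ k = v := by
  obtain ⟨k, rfl⟩ := mem_raysOf.1 hv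
  by_cases hk : k = j
  · subst hk
    left
    ext i
    simp
  · right
    exact ⟨k, hk, by ext i; simp [hk]⟩

theorem mem_starSubdiv {F : Finset (Matrix (Fin p) (Fin p) ℤ)} {R : Finset (Fin p → ℤ)}
    {M' : Matrix (Fin p) (Fin p) ℤ} :
    M' ∈ starSubdiv F R ↔ (M' ∈ F ∧ ¬ R ⊆ raysOf M') ∨
      ∃ M ∈ F, R ⊆ raysOf M ∧ ∃ j, Mᵀ j ∈ R ∧ M' = M.updateCol j fun i => ∑ v ∈ R, v i := by
  simp only [starSubdiv, Finset.mem_union, Finset.mem_filter, Finset.mem_biUnion,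
    Finset.mem_image, Finset.mem_univ, true_and, and_assoc]
  simp only [eq_comm (b := M')]
  exact Iff.rfl

theorem det_updateCol_sum_rays {M : Matrix (Fin p) (Fin p) ℤ} (hM : M.det ≠ 0)
    {R : Finset (Fin p → ℤ)} (hR : R ⊆ raysOf M) {j : Fin p} (hj : Mᵀ j ∈ R) :
    (M.updateCol j fun i => ∑ v ∈ R, v i).det = M.det := by
  classical
  have hRimage : R = (Finset.univ.filter fun k => Mᵀ k ∈ R).image fun k => Mᵀ k := by
    refine Finset.ext fun v => ?_
    simp only [Finset.mem_image, Finset.mem_filter, Finset.mem_univ, true_and]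
    constructor
    · intro hv
      obtain ⟨k, rfl⟩ := mem_raysOf.1 (hR hv)
      exact ⟨k, hv, rfl⟩
    · rintro ⟨k, hk, rfl⟩
      exact hk
  have hsum : (fun i => ∑ v ∈ R, v i) =
      fun i => ∑ k, (if Mᵀ k ∈ R then (1 : ℤ) else 0) • M i k := by
    ext i
    conv_lhs =>
      rw [hRimage, Finset.sum_image fun k _ l _ h => transpose_injective_of_det_ne_zero hM h]
    simp only [Finset.sum_filter, ite_smul, one_smul, zero_smul]
    congr! 2
  rw [hsum, Matrix.det_updateCol_sum, if_pos hj, one_smul]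

def SignCoherent (δ : Fin p → ℤ) (M : Matrix (Fin p) (Fin p) ℤ) : Prop :=
  (∀ v ∈ raysOf M, 0 ≤ δ ⬝ᵥ v) ∨ ∀ v ∈ raysOf M, δ ⬝ᵥ v ≤ 0

def IsNonnegUnimodular (M : Matrix (Fin p) (Fin p) ℤ) : Prop :=
  (∀ v ∈ raysOf M, 0 ≤ v) ∧ M.det = 1

theorem IsNonnegUnimodular.nonneg {M : Matrix (Fin p) (Fin p) ℤ} (hM : IsNonnegUnimodular M)
    (i j : Fin p) : 0 ≤ M i j :=
  hM.1 _ (mem_raysOf.2 ⟨j, rfl⟩) i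

theorem isNonnegUnimodular_one : IsNonnegUnimodular (1 : Matrix (Fin p) (Fin p) ℤ) := by
  refine ⟨fun v hv => ?_, Matrix.det_one⟩
  obtain ⟨j, rfl⟩ := mem_raysOf.1 hv
  intro i
  by_cases h : i = j <;> simp [h]

def StarStable (Q : Matrix (Fin p) (Fin p) ℤ → Prop) : Prop :=
  ∀ M (R : Finset (Fin p → ℤ)) j, Q M → R ⊆ raysOf M → Mᵀ j ∈ R →
    Q (M.updateCol j fun i => ∑ v ∈ R, v i)

theorem starStable_of_rays {P : (Fin p → ℤ) → Prop} (h0 : ∀ R : Finset (Fin p → ℤ),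
    (∀ v ∈ R, P v) → P fun i => ∑ v ∈ R, v i) :
    StarStable fun M => ∀ v ∈ raysOf M, P v := by
  intro M R j hM hR _ v hv
  rcases mem_raysOf_updateCol hv with rfl | ⟨k, -, rfl⟩
  · exact h0 R fun w hw => hM w (hR hw)
  · exact hM _ (mem_raysOf.2 ⟨k, rfl⟩)

theorem starStable_signCoherent (δ : Fin p → ℤ) : StarStable (SignCoherent δ) := by
  intro M R j hM hR hj
  rcases hM with hM | hM
  · refine .inl (starStable_of_rays (P := fun v => 0 ≤ δ ⬝ᵥ v) (fun R hR => ?_) M R j hM hR hj)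
    rw [show (fun i => ∑ v ∈ R, v i) = ∑ v ∈ R, v by ext; simp, dotProduct_sum]
    exact Finset.sum_nonneg hR
  · refine .inr (starStable_of_rays (P := fun v => δ ⬝ᵥ v ≤ 0) (fun R hR => ?_) M R j hM hR hj)
    rw [show (fun i => ∑ v ∈ R, v i) = ∑ v ∈ R, v by ext; simp, dotProduct_sum]
    exact Finset.sum_nonpos hR

theorem starStable_isNonnegUnimodular : StarStable (p := p) IsNonnegUnimodular := by
  intro M R j hM hR hj
  refine ⟨starStable_of_rays (P := fun v => 0 ≤ v) (fun R hR => ?_) M R j hM.1 hR hj, ?_⟩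
  · exact fun i => Finset.sum_nonneg fun v hv => hR v hv i
  · rw [det_updateCol_sum_rays (by simp [hM.2]) hR hj, hM.2]

theorem IsBlowupTower.trans {F₀ F₁ F₂ : Finset (Matrix (Fin p) (Fin p) ℤ)}
    (h₁ : IsBlowupTower p F₀ F₁) (h₂ : IsBlowupTower p F₁ F₂) : IsBlowupTower p F₀ F₂ := by
  induction h₂ with
  | refl => exact h₁
  | step F _ M hM J hJ ih => exact .step F₀ F ih M hM J hJ

theorem IsBlowupTower.forall_of_starStable {Q : Matrix (Fin p) (Fin p) ℤ → Prop}
    (hQ : StarStable Q) {F₀ F : Finset (Matrix (Fin p) (Fin p) ℤ)} (h : IsBlowupTower p F₀ F)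
    (h₀ : ∀ M ∈ F₀, Q M) : ∀ M ∈ F, Q M := by
  induction h with
  | refl => exact h₀
  | step F _ M hM J hJ ih =>
    intro M' hM'
    rcases mem_starSubdiv.1 hM' with ⟨hM'F, -⟩ | ⟨M, hMF, hR, j, hj, rfl⟩
    · exact ih M' hM'F
    · exact hQ M _ j (ih M hMF) hR hj

def badPairs (δ : Fin p → ℤ) (F : Finset (Matrix (Fin p) (Fin p) ℤ)) :
    Finset ((Fin p → ℤ) × (Fin p → ℤ)) :=
  (F.biUnion fun M => raysOf M ×ˢ raysOf M).filter fun x => 0 < δ ⬝ᵥ x.1 ∧ δ ⬝ᵥ x.2 < 0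

def pairWeight (δ : Fin p → ℤ) (x : (Fin p → ℤ) × (Fin p → ℤ)) : ℕ :=
  (δ ⬝ᵥ x.1).natAbs + (δ ⬝ᵥ x.2).natAbs

theorem mem_badPairs {δ : Fin p → ℤ} {F : Finset (Matrix (Fin p) (Fin p) ℤ)}
    {x : (Fin p → ℤ) × (Fin p → ℤ)} :
    x ∈ badPairs δ F ↔
      (∃ M ∈ F, x.1 ∈ raysOf M ∧ x.2 ∈ raysOf M) ∧ 0 < δ ⬝ᵥ x.1 ∧ δ ⬝ᵥ x.2 < 0 := by
  simp [badPairs]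

theorem signCoherent_of_badPairs_eq_empty {δ : Fin p → ℤ}
    {F : Finset (Matrix (Fin p) (Fin p) ℤ)} (h : badPairs δ F = ∅) :
    ∀ M ∈ F, SignCoherent δ M := by
  intro M hM
  by_contra hbad
  simp only [SignCoherent, not_or, not_forall, not_le, exists_prop] at hbad
  obtain ⟨⟨w, hw, hwneg⟩, ⟨v, hv, hvpos⟩⟩ := hbad
  have : (v, w) ∈ badPairs δ F := mem_badPairs.2 ⟨⟨M, hM, hv, hw⟩, hvpos, hwneg⟩
  simp [h] at this

theorem dotProduct_sum_pair {δ v w : Fin p → ℤ} (hvw : v ≠ w) :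
    δ ⬝ᵥ (fun i => ∑ u ∈ ({v, w} : Finset (Fin p → ℤ)), u i) = δ ⬝ᵥ v + δ ⬝ᵥ w := by
  rw [show (fun i => ∑ u ∈ ({v, w} : Finset (Fin p → ℤ)), u i) = v + w by
    ext i; simp [Finset.sum_pair hvw]]
  exact dotProduct_add δ v w

theorem exists_pairWeight_lt_or_mem_erase {δ : Fin p → ℤ}
    {F : Finset (Matrix (Fin p) (Fin p) ℤ)} {M : Matrix (Fin p) (Fin p) ℤ} (hMF : M ∈ F)
    (hM : M.det ≠ 0) {v w : Fin p → ℤ} (hv : v ∈ raysOf M) (hw : w ∈ raysOf M)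
    (hvpos : 0 < δ ⬝ᵥ v) (hwneg : δ ⬝ᵥ w < 0) {j : Fin p}
    (hj : Mᵀ j ∈ ({v, w} : Finset (Fin p → ℤ))) {y₁ y₂ : Fin p → ℤ}
    (hy₁ : y₁ ∈ raysOf (M.updateCol j fun i => ∑ u ∈ {v, w}, u i))
    (hy₂ : y₂ ∈ raysOf (M.updateCol j fun i => ∑ u ∈ {v, w}, u i))
    (hy₁pos : 0 < δ ⬝ᵥ y₁) (hy₂neg : δ ⬝ᵥ y₂ < 0) :
    (∃ y ∈ badPairs δ F, pairWeight δ (y₁, y₂) < pairWeight δ y) ∨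
      (y₁, y₂) ∈ (badPairs δ F).erase (v, w) := by
  have hvw : v ≠ w := by rintro rfl; omega
  have hu := dotProduct_sum_pair (δ := δ) hvw
  have hchild : ∀ r ∈ raysOf (M.updateCol j fun i => ∑ u ∈ {v, w}, u i),
      r = (fun i => ∑ u ∈ {v, w}, u i) ∨ (r ∈ raysOf M ∧ r ≠ Mᵀ j) := by
    intro r hr
    rcases mem_raysOf_updateCol hr with h | ⟨k, hkj, rfl⟩
    · exact .inl h
    · exact .inr ⟨mem_raysOf.2 ⟨k, rfl⟩, fun h => hkj (transpose_injective_of_det_ne_zero hM h)⟩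
  rcases hchild y₁ hy₁ with rfl | ⟨hy₁M, hy₁j⟩
  · rcases hchild y₂ hy₂ with rfl | ⟨hy₂M, -⟩
    · omega
    refine .inl ⟨(v, y₂), mem_badPairs.2 ⟨⟨M, hMF, hv, hy₂M⟩, hvpos, hy₂neg⟩, ?_⟩
    simp only [pairWeight, hu] at hy₁pos ⊢
    omega
  rcases hchild y₂ hy₂ with rfl | ⟨hy₂M, hy₂j⟩
  · refine .inl ⟨(y₁, w), mem_badPairs.2 ⟨⟨M, hMF, hy₁M, hw⟩, hy₁pos, hwneg⟩, ?_⟩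
    simp only [pairWeight, hu] at hy₂neg ⊢
    omega
  refine .inr (Finset.mem_erase.2 ⟨?_, mem_badPairs.2 ⟨⟨M, hMF, hy₁M, hy₂M⟩, hy₁pos, hy₂neg⟩⟩)
  rintro ⟨⟩
  simp only [Finset.mem_insert, Finset.mem_singleton] at hj
  exact hj.elim (fun h => hy₁j h.symm) fun h => hy₂j h.symm

/-- Subdividing the cone spanned by a bad pair `(v, w)` of maximal weight removes `(v, w)` and
creates only bad pairs of smaller weight: these involve the new ray `v + w`, and
`|δ ⬝ (v + w)|` is smaller than `|δ ⬝ v|` or `|δ ⬝ w|`. -/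
theorem exists_starSubdiv_badPairs {δ : Fin p → ℤ} {F : Finset (Matrix (Fin p) (Fin p) ℤ)}
    (hF : ∀ M ∈ F, M.det ≠ 0) {x₀ : (Fin p → ℤ) × (Fin p → ℤ)} (hx₀ : x₀ ∈ badPairs δ F)
    (hmax : ∀ y ∈ badPairs δ F, pairWeight δ y ≤ pairWeight δ x₀) :
    ∃ M ∈ F, ∃ J : Finset (Fin p), 2 ≤ J.card ∧
      ∀ y ∈ badPairs δ (starSubdiv F (colSet M J)),
        pairWeight δ y < pairWeight δ x₀ ∨ y ∈ (badPairs δ F).erase x₀ := by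
  obtain ⟨v, w⟩ := x₀
  obtain ⟨⟨M₀, hM₀, hv, hw⟩, hvpos, hwneg⟩ := mem_badPairs.1 hx₀
  dsimp only at hv hw hvpos hwneg
  obtain ⟨j₀, rfl⟩ := mem_raysOf.1 hv
  obtain ⟨k₀, rfl⟩ := mem_raysOf.1 hw
  have hjk : j₀ ≠ k₀ := by rintro rfl; omega
  have hR : colSet M₀ {j₀, k₀} = {M₀ᵀ j₀, M₀ᵀ k₀} := by
    simp only [colSet, Finset.image_insert, Finset.image_singleton]
    rfl
  refine ⟨M₀, hM₀, {j₀, k₀}, (Finset.card_pair hjk).ge, fun y hy => ?_⟩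
  rw [hR] at hy
  obtain ⟨y₁, y₂⟩ := y
  obtain ⟨⟨M', hM', hy₁, hy₂⟩, hy₁pos, hy₂neg⟩ := mem_badPairs.1 hy
  dsimp only at hy₁ hy₂ hy₁pos hy₂neg
  rcases mem_starSubdiv.1 hM' with ⟨hM'F, hnR⟩ | ⟨M, hMF, hRM, j, hj, rfl⟩
  · refine .inr (Finset.mem_erase.2 ⟨?_, mem_badPairs.2 ⟨⟨M', hM'F, hy₁, hy₂⟩, hy₁pos, hy₂neg⟩⟩)
    rintro ⟨⟩
    exact hnR (Finset.insert_subset hy₁ (Finset.singleton_subset_iff.2 hy₂))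
  rcases exists_pairWeight_lt_or_mem_erase hMF (hF M hMF) (hRM (Finset.mem_insert_self _ _))
    (hRM (Finset.mem_insert_of_mem (Finset.mem_singleton_self _))) hvpos hwneg hj hy₁ hy₂
    hy₁pos hy₂neg with ⟨y, hy, hlt⟩ | h
  · exact .inl (hlt.trans_le (hmax y hy))
  · exact .inr h

theorem exists_blowupTower_signCoherent (δ : Fin p → ℤ) (F : Finset (Matrix (Fin p) (Fin p) ℤ))
    (hF : ∀ M ∈ F, IsNonnegUnimodular M) :
    ∃ F', IsBlowupTower p F F' ∧ ∀ M ∈ F', SignCoherent δ M := by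
  by_cases hbad : badPairs δ F = ∅
  · exact ⟨F, .refl F, signCoherent_of_badPairs_eq_empty hbad⟩
  obtain ⟨x₀, hx₀, hmax⟩ :=
    Finset.exists_max_image _ (pairWeight δ) (Finset.nonempty_iff_ne_empty.2 hbad)
  obtain ⟨M, hM, J, hJ, hdecr⟩ :=
    exists_starSubdiv_badPairs (fun M hM => by simp [(hF M hM).2]) hx₀ hmax
  have hstep : IsBlowupTower p F (starSubdiv F (colSet M J)) := .step F F (.refl F) M hM J hJ
  obtain ⟨F', htower, hF'⟩ := exists_blowupTower_signCoherent δ (starSubdiv F (colSet M J))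
    (hstep.forall_of_starStable starStable_isNonnegUnimodular hF)
  exact ⟨F', hstep.trans htower, hF'⟩
termination_by ((badPairs δ F).sup (pairWeight δ),
  ((badPairs δ F).filter fun y => pairWeight δ y = (badPairs δ F).sup (pairWeight δ)).card)
decreasing_by exact prodLex_sup_card_lt _ hx₀ hmax hdecr

theorem exists_blowupFan_signCoherent (D : Finset (Fin p → ℤ)) :
    ∃ F, IsBlowupFan p F ∧ ∀ M ∈ F, IsNonnegUnimodular M ∧ ∀ δ ∈ D, SignCoherent δ M := by
  classical
  induction D using Finset.induction_on with
  | empty =>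
    refine ⟨{1}, .refl _, fun M hM => ?_⟩
    rw [Finset.mem_singleton.1 hM]
    exact ⟨isNonnegUnimodular_one, by simp⟩
  | insert δ D _ ih =>
    obtain ⟨F₀, hF₀, hF₀D⟩ := ih
    obtain ⟨F, htower, hδ⟩ := exists_blowupTower_signCoherent δ F₀ fun M hM => (hF₀D M hM).1
    refine ⟨F, hF₀.trans htower, fun M hM => ⟨?_, ?_⟩⟩
    · exact htower.forall_of_starStable starStable_isNonnegUnimodular
        (fun M hM => (hF₀D M hM).1) M hM
    · rintro δ' hδ'
      rcases Finset.mem_insert.1 hδ' with rfl | hδ'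
      · exact hδ M hM
      · exact htower.forall_of_starStable (starStable_signCoherent δ')
          (fun M hM => (hF₀D M hM).2 δ' hδ') M hM

end Fan

section Chart

variable {p q : ℕ}

/-- The exponent of `r_j` in the pull-back along `monMap p q M` of the monomial with
exponent `d`. -/
def rExp (M : Matrix (Fin p) (Fin p) ℤ) (d : Fin p ⊕ Fin q →₀ ℕ) (j : Fin p) : ℕ :=
  ∑ i, (M i j).toNat * d (Sum.inl i)

def chartExp (M : Matrix (Fin p) (Fin p) ℤ) (d : Fin p ⊕ Fin q →₀ ℕ) : Fin p ⊕ Fin q →₀ ℕ :=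
  Finsupp.equivFunOnFinite.symm (Sum.elim (rExp M d) fun k => d (Sum.inr k))

theorem chartHom_monomial (M : Matrix (Fin p) (Fin p) ℤ) (d : Fin p ⊕ Fin q →₀ ℕ) (c : ℝ) :
    chartHom ℝ p q M (monomial d c) = monomial (chartExp M d) c := by
  have hprod : ∀ e : Fin p ⊕ Fin q →₀ ℕ, (e.prod fun s n => (X s : MvPolynomial _ ℝ) ^ n) =
      (∏ j, X (Sum.inl j) ^ e (Sum.inl j)) * ∏ k, X (Sum.inr k) ^ e (Sum.inr k) := fun e => by
    rw [Finsupp.prod_fintype _ _ fun _ => pow_zero _, Fintype.prod_sum_type]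
  rw [monomial_eq, monomial_eq, map_mul, chartHom, aeval_C, algebraMap_eq, hprod, hprod,
    map_mul, map_prod, map_prod]
  congr 2
  · simp only [map_pow, aeval_X, Sum.elim_inl, ← Finset.prod_pow, ← pow_mul]
    rw [Finset.prod_comm]
    refine Finset.prod_congr rfl fun j _ => ?_
    rw [Finset.prod_pow_eq_pow_sum]
    simp [chartExp, rExp]
  · simp [chartExp]

theorem chartHom_eq_sum (M : Matrix (Fin p) (Fin p) ℤ) (g : MvPolynomial (Fin p ⊕ Fin q) ℝ) :
    chartHom ℝ p q M g = ∑ d ∈ g.support, monomial (chartExp M d) (coeff d g) := by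
  conv_lhs => rw [g.as_sum]
  simp only [map_sum, chartHom_monomial]

theorem exists_chartExp_eq_of_mem_support {M : Matrix (Fin p) (Fin p) ℤ}
    {g : MvPolynomial (Fin p ⊕ Fin q) ℝ} {e : Fin p ⊕ Fin q →₀ ℕ}
    (he : e ∈ (chartHom ℝ p q M g).support) : ∃ d ∈ g.support, chartExp M d = e := by
  rw [chartHom_eq_sum] at he
  obtain ⟨d, hd, he⟩ := Finset.mem_biUnion.1 (support_sum he)
  exact ⟨d, hd, (Finset.mem_singleton.1 (support_monomial_subset he)).symm⟩

theorem cast_rExp {M : Matrix (Fin p) (Fin p) ℤ} (hM : ∀ i j, 0 ≤ M i j)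
    (d : Fin p ⊕ Fin q →₀ ℕ) (j : Fin p) :
    (rExp M d j : ℤ) = ((fun i => (d (Sum.inl i) : ℤ)) ᵥ* M) j := by
  simp only [rExp, Matrix.vecMul, dotProduct, Nat.cast_sum, Nat.cast_mul,
    Int.toNat_of_nonneg (hM _ j)]
  exact Finset.sum_congr rfl fun i _ => mul_comm _ _

theorem chartExp_injective {M : Matrix (Fin p) (Fin p) ℤ} (hM : ∀ i j, 0 ≤ M i j)
    (hdet : M.det ≠ 0) : Function.Injective (chartExp (q := q) M) := by
  intro d d' h
  have hr : rExp M d = rExp M d' := funext fun j => by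
    simpa [chartExp] using DFunLike.congr_fun h (Sum.inl j)
  have hvec : (fun i => (d (Sum.inl i) : ℤ)) = fun i => (d' (Sum.inl i) : ℤ) := by
    by_contra hne
    refine hdet (Matrix.exists_vecMul_eq_zero_iff.1 ⟨_, sub_ne_zero.2 hne, ?_⟩)
    ext j
    rw [Matrix.sub_vecMul, Pi.sub_apply, ← cast_rExp hM, ← cast_rExp hM, hr, sub_self,
      Pi.zero_apply]
  ext (i | k)
  · exact_mod_cast congrFun hvec i
  · simpa [chartExp] using DFunLike.congr_fun h (Sum.inr k)

theorem coeff_chartHom_chartExp {M : Matrix (Fin p) (Fin p) ℤ} (hM : ∀ i j, 0 ≤ M i j)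
    (hdet : M.det ≠ 0) (g : MvPolynomial (Fin p ⊕ Fin q) ℝ) (d : Fin p ⊕ Fin q →₀ ℕ) :
    coeff (chartExp M d) (chartHom ℝ p q M g) = coeff d g := by
  simp only [chartHom_eq_sum, coeff_sum, coeff_monomial, (chartExp_injective hM hdet).eq_iff,
    Finset.sum_ite_eq', mem_support_iff, ite_not]
  split_ifs with h <;> simp [h]

theorem eval_chartHom (M : Matrix (Fin p) (Fin p) ℤ) (z : Euc (Fin p ⊕ Fin q))
    (g : MvPolynomial (Fin p ⊕ Fin q) ℝ) :
    eval (fun s => z s) (chartHom ℝ p q M g) = eval (fun s => monMap p q M z s) g := by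
  rw [← coe_aeval_eq_eval, ← coe_aeval_eq_eval]
  refine DFunLike.congr_fun (algHom_ext fun s => ?_ :
    (aeval fun s => z s).comp (chartHom ℝ p q M) = aeval fun s => monMap p q M z s) g
  rcases s with i | k <;> simp [chartHom, monMap]

def inlExp (m : Fin p → ℕ) : Fin p ⊕ Fin q →₀ ℕ :=
  Finsupp.equivFunOnFinite.symm (Sum.elim m 0)

theorem exists_chartHom_eq_monomial_mul {M : Matrix (Fin p) (Fin p) ℤ} (hM : ∀ i j, 0 ≤ M i j)
    (hdet : M.det ≠ 0) {g : MvPolynomial (Fin p ⊕ Fin q) ℝ} {d₀ : Fin p ⊕ Fin q →₀ ℕ}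
    (hd₀ : d₀ ∈ g.support) (hmin : ∀ d ∈ g.support, rExp M d₀ ≤ rExp M d) :
    ∃ h, chartHom ℝ p q M g = monomial (inlExp (rExp M d₀)) 1 * h ∧
      killCompl (R := ℝ) Sum.inr_injective h ≠ 0 := by
  set m : Fin p ⊕ Fin q →₀ ℕ := inlExp (rExp M d₀)
  have hle : ∀ e ∈ (chartHom ℝ p q M g).support, m ≤ e := by
    intro e he
    obtain ⟨d, hd, rfl⟩ := exists_chartExp_eq_of_mem_support he
    rintro (j | k)
    · simpa [m, inlExp, chartExp] using hmin d hd j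
    · simp [m, inlExp]
  have hmod : (chartHom ℝ p q M g).modMonomial m = 0 := by
    ext e
    rw [coeff_zero]
    by_cases h : m ≤ e
    · exact coeff_modMonomial_of_le _ h
    · rw [coeff_modMonomial_of_not_le _ h]
      exact notMem_support_iff.1 fun he => h (hle e he)
  refine ⟨(chartHom ℝ p q M g).divMonomial m, ?_, fun h0 => ?_⟩
  · simpa [hmod] using (divMonomial_add_modMonomial (chartHom ℝ p q M g) m).symm
  -- the coefficient of the quotient at the `x`-part of `d₀` is that of `g` at `d₀`
  have hsplit : m + (d₀.comapDomain Sum.inr Sum.inr_injective.injOn).mapDomain Sum.inr =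
      chartExp M d₀ := by
    ext (j | k)
    · simp [m, inlExp, chartExp, Finsupp.mapDomain_of_notMem_range]
    · simp [m, inlExp, chartExp, Finsupp.mapDomain_apply Sum.inr_injective]
  have := congrArg (coeff (d₀.comapDomain Sum.inr Sum.inr_injective.injOn)) h0
  rw [coeff_killCompl, coeff_divMonomial, coeff_zero, hsplit,
    coeff_chartHom_chartExp hM hdet] at this
  exact mem_support_iff.1 hd₀ this

theorem rExp_le_or_le_of_signCoherent {M : Matrix (Fin p) (Fin p) ℤ} (hM : ∀ i j, 0 ≤ M i j)
    {d d' : Fin p ⊕ Fin q →₀ ℕ}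
    (h : SignCoherent (fun i => (d (Sum.inl i) : ℤ) - d' (Sum.inl i)) M) :
    rExp M d ≤ rExp M d' ∨ rExp M d' ≤ rExp M d := by
  have hdiff : ∀ j, (fun i => (d (Sum.inl i) : ℤ) - d' (Sum.inl i)) ⬝ᵥ Mᵀ j =
      rExp M d j - rExp M d' j := fun j => by
    rw [cast_rExp hM, cast_rExp hM, ← Pi.sub_apply, ← Matrix.sub_vecMul]
    rfl
  rcases h with h | h
  · refine .inr fun j => show rExp M d' j ≤ rExp M d j from ?_
    have := h _ (mem_raysOf.2 ⟨j, rfl⟩)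
    rw [hdiff] at this
    omega
  · refine .inl fun j => show rExp M d j ≤ rExp M d' j from ?_
    have := h _ (mem_raysOf.2 ⟨j, rfl⟩)
    rw [hdiff] at this
    omega

/-- The coordinates `r_i` that vanish on the image under the chart of `{r_j = 0, j ∈ L}`. -/
def colSupport (M : Matrix (Fin p) (Fin p) ℤ) (L : Finset (Fin p)) : Finset (Fin p) :=
  L.biUnion fun j => Finset.univ.filter fun i => 0 < M i j

theorem mem_colSupport {M : Matrix (Fin p) (Fin p) ℤ} {L : Finset (Fin p)} {i : Fin p} :
    i ∈ colSupport M L ↔ ∃ j ∈ L, 0 < M i j := by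
  simp [colSupport]

theorem colSupport_nonempty {M : Matrix (Fin p) (Fin p) ℤ} (hM : ∀ i j, 0 ≤ M i j)
    (hdet : M.det ≠ 0) {L : Finset (Fin p)} (hL : L.Nonempty) : (colSupport M L).Nonempty := by
  obtain ⟨j, hj⟩ := hL
  by_contra! hempty
  refine hdet (Matrix.det_eq_zero_of_column_eq_zero j fun i => ?_)
  refine le_antisymm (not_lt.1 fun hij => ?_) (hM i j)
  simpa [hempty] using mem_colSupport.2 ⟨j, hj, hij⟩

theorem monMap_mem_face (M : Matrix (Fin p) (Fin p) ℤ) {L : Finset (Fin p)}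
    {z : Euc (Fin p ⊕ Fin q)} (hz : ∀ j ∈ L, z (Sum.inl j) = 0) :
    monMap p q M z ∈ face (Fin q) (colSupport M L) := by
  intro i hi
  obtain ⟨j, hj, hij⟩ := mem_colSupport.1 hi
  simp only [monMap, Sum.elim_inl]
  exact Finset.prod_eq_zero (Finset.mem_univ j) (by rw [hz j hj]; exact zero_pow (by omega))

theorem rExp_eq_zero {M : Matrix (Fin p) (Fin p) ℤ} {L : Finset (Fin p)}
    {d : Fin p ⊕ Fin q →₀ ℕ} (hd : ∀ i ∈ colSupport M L, d (Sum.inl i) = 0) {j : Fin p}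
    (hj : j ∈ L) : rExp M d j = 0 := by
  refine Finset.sum_eq_zero fun i _ => ?_
  by_cases hij : 0 < M i j
  · rw [hd i (mem_colSupport.2 ⟨j, hj, hij⟩), mul_zero]
  · rw [Int.toNat_of_nonpos (not_lt.1 hij), zero_mul]

/-- The monomial factor of the pull-back of `g` does not vanish on the stratum where exactly the
`r_j`, `j ∈ L`, vanish, because the monomial of `g` free of the variables of `colSupport M L`
forces its exponents at `j ∈ L` to be zero. -/
theorem exists_factor_vanishing_on_stratum {A : Set (Euc (Fin p ⊕ Fin q))}
    {M : Matrix (Fin p) (Fin p) ℤ} (hM : ∀ i j, 0 ≤ M i j) (hdet : M.det ≠ 0)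
    {L : Finset (Fin p)} {g : MvPolynomial (Fin p ⊕ Fin q) ℝ}
    (hg : g ∈ vanishingIdeal (A ∩ face (Fin q) (colSupport M L)))
    (hfree : ∃ d ∈ g.support, ∀ i ∈ colSupport M L, d (Sum.inl i) = 0)
    (hchain : ∀ d ∈ g.support, ∀ d' ∈ g.support, rExp M d ≤ rExp M d' ∨ rExp M d' ≤ rExp M d) :
    ∃ h, killCompl (R := ℝ) Sum.inr_injective h ≠ 0 ∧ ∀ z ∈ monMap p q M ⁻¹' A,
      (∀ j, z (Sum.inl j) = 0 ↔ j ∈ L) → eval (fun s => z s) h = 0 := by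
  obtain ⟨d₁, hd₁, hd₁free⟩ := hfree
  obtain ⟨d₀, hd₀, hmin⟩ := exists_mem_forall_le_of_comparable ⟨d₁, hd₁⟩ (rExp M) hchain
  obtain ⟨h, hfac, hh⟩ := exists_chartHom_eq_monomial_mul hM hdet hd₀ hmin
  refine ⟨h, hh, fun z hz hzL => ?_⟩
  have hgz : eval (fun s => z s) (chartHom ℝ p q M g) = 0 := by
    rw [eval_chartHom]
    exact hg _ ⟨hz, monMap_mem_face M fun j => (hzL j).2⟩
  rw [hfac, eval_mul] at hgz
  refine (mul_eq_zero.1 hgz).resolve_left (eval_monomial_one_ne_zero ?_)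
  rintro (j | k) hs
  · refine fun hzj => hs ?_
    have := hmin d₁ hd₁ j
    rw [rExp_eq_zero hd₁free ((hzL j).1 hzj)] at this
    simpa [inlExp] using this
  · simp [inlExp] at hs

theorem almostStrictlyAllowable_monMap_preimage {A : Set (Euc (Fin p ⊕ Fin q))}
    {M : Matrix (Fin p) (Fin p) ℤ} (hM : ∀ i j, 0 ≤ M i j) (hdet : M.det ≠ 0)
    (g : Finset (Fin p) → MvPolynomial (Fin p ⊕ Fin q) ℝ)
    (hg : ∀ K : Finset (Fin p), K.Nonempty → g K ∈ vanishingIdeal (A ∩ face (Fin q) K) ∧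
      ∃ d ∈ (g K).support, ∀ i ∈ K, d (Sum.inl i) = 0)
    (hchain : ∀ K, ∀ d ∈ (g K).support, ∀ d' ∈ (g K).support,
      rExp M d ≤ rExp M d' ∨ rExp M d' ≤ rExp M d) :
    AlmostStrictlyAllowable (monMap p q M ⁻¹' A) := by
  classical
  choose! h hh hvan using fun (L : Finset (Fin p)) (hL : L.Nonempty) =>
    have hK := hg _ (colSupport_nonempty hM hdet hL)
    exists_factor_vanishing_on_stratum hM hdet hK.1 hK.2 (hchain _)
  intro I hI
  refine strictlyAllowableWrt_of_killCompl_ne_zero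
    (f := ∏ L ∈ Finset.univ.filter Finset.Nonempty, h L) ?_ ?_
  · rintro z ⟨hz, hzI⟩
    set Lz := Finset.univ.filter fun j => z (Sum.inl j) = 0
    have hLz : Lz.Nonempty := hI.mono fun i hi => by simpa [Lz] using hzI i hi
    rw [eval_prod]
    exact Finset.prod_eq_zero (Finset.mem_filter.2 ⟨Finset.mem_univ _, hLz⟩)
      (hvan Lz hLz z hz fun j => by simp [Lz])
  · rw [map_prod]
    exact Finset.prod_ne_zero_iff.2 fun L hL => hh L (Finset.mem_filter.1 hL).2

end Chart

end SA

theorem statement_11_general (p q : ℕ) (A : Set (Euc (Fin p ⊕ Fin q)))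
    (hallow : SA.Allowable A) :
    ∃ F : Finset (Matrix (Fin p) (Fin p) ℤ), SA.IsBlowupFan p F ∧
      ∀ M ∈ F, SA.AlmostStrictlyAllowable (SA.monMap p q M ⁻¹' A) := by
  classical
  choose! g hg using fun (K : Finset (Fin p)) (hK : K.Nonempty) =>
    hallow.exists_mem_vanishingIdeal hK
  obtain ⟨F, hF, hFM⟩ := SA.exists_blowupFan_signCoherent <| Finset.univ.biUnion fun K =>
    ((g K).support ×ˢ (g K).support).image fun dd i => (dd.1 (Sum.inl i) : ℤ) - dd.2 (Sum.inl i)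
  refine ⟨F, hF, fun M hM => ?_⟩
  have hnonneg := (hFM M hM).1.nonneg
  refine SA.almostStrictlyAllowable_monMap_preimage hnonneg (by simp [(hFM M hM).1.2]) g hg
    fun K d hd d' hd' => SA.rExp_le_or_le_of_signCoherent hnonneg ((hFM M hM).2 _ ?_)
  exact Finset.mem_biUnion.2 ⟨K, Finset.mem_univ _,
    Finset.mem_image.2 ⟨(d, d'), Finset.mem_product.2 ⟨hd, hd'⟩, rfl⟩⟩

/-- Let `A` be a closed semi-algebraic subset of `ℝ^p × ℝ^q` which is
allowable. Then there is a succession of permissible blow-ups `μ : R̃^n → ℝ^n` (recorded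
by its fan `F` of monomial charts) such that `μ⁻¹(A)` is almost strictly allowable: in
each chart (whose blow-down map is the monomial map with exponent matrix `M`) the
preimage of `A` is strictly allowable with respect to every proper face. -/
theorem statement_11 (p q : ℕ) (A : Set (Euc (Fin p ⊕ Fin q))) (hA : IsClosed A)
    (hsa : SA.IsSemialgebraic A) (hallow : SA.Allowable A) :
    ∃ F : Finset (Matrix (Fin p) (Fin p) ℤ), SA.IsBlowupFan p F ∧
      ∀ M ∈ F, SA.AlmostStrictlyAllowable (SA.monMap p q M ⁻¹' A) :=
  statement_11_general p q A hallow
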